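/- arXiv:2305.01781 — 4 statements merged into one kernel-verified Lean document; each statement's English description precedes it below -/
import Mathlib

section
/- Let φ(x) = min_i f_i(x) with f_i : ℝⁿ → ℝ continuously differentiable, x₀ ∈ ℝⁿ with 0 ∉ ∂̄φ(x₀) := co{∇f_i(x₀) : i ∈ R(x₀)}. Let w₀ be the point of maximal Euclidean norm in ∂̄φ(x₀) and g₀ = −w₀/‖w₀‖. Then the directional derivative of φ at x₀ in direction g₀ is strictly negative, and consequently φ(x₀ + αg₀) < φ(x₀) for all sufficiently small α > 0. -/
/-!
Near `x₀` only the active functions matter: by continuity the inactive ones stay strictly above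
the minimum. The active ones all take the value `φ x₀` at `x₀`, so the right difference quotient
of `φ` along `g₀` is the minimum of theirs and tends to `min_{i active} ⟪∇fᵢ(x₀), g₀⟫`. A linear
functional attains its infimum over a convex hull on the generating set, so this limit is the
infimum of `⟪·, g₀⟫` over `D`, which is at most `⟪w₀, g₀⟫ = -‖w₀‖ < 0`.
-/

open RealInnerProductSpace Filter Set Topology

section FiniteMin

variable {ι : Type*}

theorem eventually_iInf_eq_inf'_of_continuousWithinAt [Finite ι] {X : Type*} [TopologicalSpace X]
    {f : ι → X → ℝ} {s : Set X} {x₀ : X} (hf : ∀ i, ContinuousWithinAt (f i) s x₀)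
    {A : Finset ι} (hA : A.Nonempty) (hact : ∀ i, i ∈ A ↔ f i x₀ = ⨅ j, f j x₀) :
    ∀ᶠ x in 𝓝[s] x₀, ⨅ i, f i x = A.inf' hA (f · x) := by
  obtain ⟨j, hj⟩ := hA
  have : Nonempty ι := ⟨j⟩
  have hinactive : ∀ i, ∀ᶠ x in 𝓝[s] x₀, i ∉ A → f j x < f i x := fun i => by
    by_cases hi : i ∈ A
    · exact .of_forall fun _ h => absurd hi h
    refine ((hf j).eventually_lt (hf i) ?_).mono fun _ h _ => h
    exact (hact j).1 hj ▸ (ciInf_le (Finite.bddBelow_range _) i).lt_of_ne fun h =>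
      hi ((hact i).2 h.symm)
  filter_upwards [eventually_all.2 hinactive] with x hx
  refine le_antisymm (Finset.le_inf' _ _ fun i _ => ciInf_le (Finite.bddBelow_range _) i)
    (le_ciInf fun i => ?_)
  by_cases hi : i ∈ A
  · exact Finset.inf'_le _ hi
  · exact (Finset.inf'_le _ hj).trans (hx i hi).le

theorem HasDerivWithinAt.finset_inf'_Ioi {u : ι → ℝ → ℝ} {c : ι → ℝ} {x a : ℝ}
    {A : Finset ι} (hA : A.Nonempty) (hu : ∀ i ∈ A, HasDerivWithinAt (u i) (c i) (Ioi x) x)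
    (ha : ∀ i ∈ A, u i x = a) :
    HasDerivWithinAt (fun t => A.inf' hA (u · t)) (A.inf' hA c) (Ioi x) x := by
  simp only [hasDerivWithinAt_iff_tendsto_slope' self_notMem_Ioi] at hu ⊢
  refine (Tendsto.finset_inf'_nhds_apply hA hu).congr' ?_
  filter_upwards [self_mem_nhdsWithin] with t (ht : x < t)
  have hmono : Monotone fun y : ℝ => (y - a) / (t - x) := fun y z hyz =>
    div_le_div_of_nonneg_right (sub_le_sub_right hyz a) (sub_pos.2 ht).le
  simp only [slope_def_field, (Finset.inf'_congr hA rfl ha).trans (Finset.inf'_const hA a)]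
  rw [Finset.apply_inf'_eq_inf'_comp hA (fun y : ℝ => (y - a) / (t - x)) fun y z => hmono.map_min]
  exact Finset.inf'_congr hA rfl fun i hi => by simp [ha i hi]

theorem HasDerivWithinAt.iInf_Ioi [Finite ι] {u : ι → ℝ → ℝ} {c : ι → ℝ} {x : ℝ}
    (hu : ∀ i, HasDerivWithinAt (u i) (c i) (Ioi x) x) {A : Finset ι} (hA : A.Nonempty)
    (hact : ∀ i, i ∈ A ↔ u i x = ⨅ j, u j x) :
    HasDerivWithinAt (fun t => ⨅ i, u i t) (A.inf' hA c) (Ioi x) x := by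
  have ha : ∀ i ∈ A, u i x = ⨅ j, u j x := fun i hi => (hact i).1 hi
  refine (finset_inf'_Ioi hA (fun i _ => hu i) ha).congr_of_eventuallyEq
    (eventually_iInf_eq_inf'_of_continuousWithinAt (fun i => (hu i).continuousWithinAt) hA hact) ?_
  exact ((Finset.inf'_congr hA rfl ha).trans (Finset.inf'_const hA _)).symm

end FiniteMin

theorem HasDerivWithinAt.eventually_nhdsGT_lt_of_neg {F : ℝ → ℝ} {F' x : ℝ}
    (hF : HasDerivWithinAt F F' (Ioi x) x) (hF' : F' < 0) : ∀ᶠ t in 𝓝[>] x, F t < F x := by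
  filter_upwards [hF.limsup_slope_le' self_notMem_Ioi hF', self_mem_nhdsWithin]
    with t hslope (hxt : x < t)
  rwa [slope_def_field, div_lt_iff₀ (sub_pos.2 hxt), zero_mul, sub_neg] at hslope

theorem IsLeast.image_convexHull {𝕜 E β : Type*} [Field 𝕜] [LinearOrder 𝕜] [IsStrictOrderedRing 𝕜]
    [AddCommGroup E] [Module 𝕜 E] [AddCommGroup β] [LinearOrder β] [IsOrderedAddMonoid β]
    [Module 𝕜 β] [IsStrictOrderedModule 𝕜 β] {f : E → β} {t : Set E} {m : β}
    (hf : ConcaveOn 𝕜 (convexHull 𝕜 t) f) (h : IsLeast (f '' t) m) :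
    IsLeast (f '' convexHull 𝕜 t) m := by
  refine ⟨image_mono (subset_convexHull 𝕜 t) h.1, forall_mem_image.2 fun x hx => ?_⟩
  obtain ⟨y, hy, hyx⟩ := hf.exists_le_of_mem_convexHull (subset_convexHull 𝕜 t) hx
  exact (h.2 (mem_image_of_mem f hy)).trans hyx

theorem Finset.isLeast_inf' {ι α : Type*} [LinearOrder α] {s : Finset ι} (hs : s.Nonempty)
    (f : ι → α) : IsLeast (f '' s) (s.inf' hs f) := by
  obtain ⟨i, hi, heq⟩ := s.exists_mem_eq_inf' hs f
  exact ⟨⟨i, hi, heq.symm⟩, Set.forall_mem_image.2 fun j hj => s.inf'_le f hj⟩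

theorem real_inner_neg_inv_norm_smul_self {E : Type*} [NormedAddCommGroup E]
    [InnerProductSpace ℝ E] (w : E) : ⟪w, -(‖w‖⁻¹ • w)⟫ = -‖w‖ := by
  rcases eq_or_ne w 0 with rfl | hw
  · simp
  rw [inner_neg_right, real_inner_smul_right, real_inner_self_eq_norm_mul_norm,
    inv_mul_cancel_left₀ (norm_ne_zero_iff.2 hw)]

theorem steepest_descent_direction_general (n M : ℕ)
    (f : Fin M → EuclideanSpace ℝ (Fin n) → ℝ)
    (hf : ∀ i, ContDiff ℝ 1 (f i))
    (φ : EuclideanSpace ℝ (Fin n) → ℝ)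
    (hφ : ∀ x, φ x = ⨅ i, f i x)
    (x₀ : EuclideanSpace ℝ (Fin n))
    (D : Set (EuclideanSpace ℝ (Fin n)))
    (hD : D = convexHull ℝ {w : EuclideanSpace ℝ (Fin n) |
      ∃ i : Fin M, f i x₀ = φ x₀ ∧ w = gradient (f i) x₀})
    (h0 : (0 : EuclideanSpace ℝ (Fin n)) ∉ D)
    (w₀ : EuclideanSpace ℝ (Fin n)) (hw₀ : w₀ ∈ D)
    (g₀ : EuclideanSpace ℝ (Fin n)) (hg₀ : g₀ = -(‖w₀‖⁻¹ • w₀)) :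
    sInf ((fun w => ⟪w, g₀⟫) '' D) < 0 ∧
    Tendsto (fun α : ℝ => (φ (x₀ + α • g₀) - φ x₀) / α) (nhdsWithin 0 (Set.Ioi 0))
      (nhds (sInf ((fun w => ⟪w, g₀⟫) '' D))) ∧
    ∀ᶠ α : ℝ in nhdsWithin 0 (Set.Ioi 0), φ (x₀ + α • g₀) < φ x₀ := by
  set A := Finset.univ.filter fun i => f i x₀ = φ x₀
  set c := fun i => ⟪gradient (f i) x₀, g₀⟫
  have hactive : {w | ∃ i, f i x₀ = φ x₀ ∧ w = gradient (f i) x₀} =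
      (fun i => gradient (f i) x₀) '' A := by
    ext w; simp [A, eq_comm]
  rw [hactive] at hD
  have hA : A.Nonempty := by
    rw [hD] at hw₀
    simpa using convexHull_nonempty_iff.1 ⟨w₀, hw₀⟩
  have hleast : IsLeast ((fun w => ⟪w, g₀⟫) '' D) (A.inf' hA c) := by
    rw [hD]
    refine IsLeast.image_convexHull (((innerₗ _).flip g₀).concaveOn (convex_convexHull ℝ _)) ?_
    rw [image_image]
    exact A.isLeast_inf' hA c
  have hneg : A.inf' hA c < 0 := calc
    A.inf' hA c ≤ ⟪w₀, g₀⟫ := hleast.2 ⟨w₀, hw₀, rfl⟩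
    _ = -‖w₀‖ := hg₀ ▸ real_inner_neg_inv_norm_smul_self w₀
    _ < 0 := neg_neg_of_pos (norm_pos_iff.2 fun h => h0 (h ▸ hw₀))
  have hderiv : HasDerivWithinAt (fun t : ℝ => φ (x₀ + t • g₀)) (A.inf' hA c) (Ioi 0) 0 := by
    simp only [hφ]
    refine HasDerivWithinAt.iInf_Ioi (fun i => ?_) hA fun i => ?_
    · exact HasDerivAt.hasDerivWithinAt
        (((hf i).differentiable one_ne_zero _).hasGradientAt.hasFDerivAt.hasLineDerivAt g₀)
    · simp [A, hφ]
  rw [hleast.csInf_eq]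
  refine ⟨hneg, ?_, ?_⟩
  · refine ((hasDerivWithinAt_iff_tendsto_slope' self_notMem_Ioi).1 hderiv).congr fun α => ?_
    simp [slope_def_field]
  · simpa using hderiv.eventually_nhdsGT_lt_of_neg hneg

/-- Steepest (superdifferential) descent direction: if `0 ∉ ∂̄φ(x₀)` and `w₀` is the
maximal-norm point of `∂̄φ(x₀)`, then `g₀ = -w₀/‖w₀‖` is a strict descent direction:
the directional derivative of `φ` at `x₀` in direction `g₀` is negative, and
`φ(x₀ + αg₀) < φ(x₀)` for all sufficiently small `α > 0`. -/
theorem steepest_descent_direction (n M : ℕ) (hM : 0 < M)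
    (f : Fin M → EuclideanSpace ℝ (Fin n) → ℝ)
    (hf : ∀ i, ContDiff ℝ 1 (f i))
    (φ : EuclideanSpace ℝ (Fin n) → ℝ)
    (hφ : ∀ x, φ x = ⨅ i, f i x)
    (x₀ : EuclideanSpace ℝ (Fin n))
    (D : Set (EuclideanSpace ℝ (Fin n)))
    (hD : D = convexHull ℝ {w : EuclideanSpace ℝ (Fin n) |
      ∃ i : Fin M, f i x₀ = φ x₀ ∧ w = gradient (f i) x₀})
    (h0 : (0 : EuclideanSpace ℝ (Fin n)) ∉ D)
    (w₀ : EuclideanSpace ℝ (Fin n)) (hw₀ : w₀ ∈ D)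
    (hmax : ∀ w ∈ D, ‖w‖ ≤ ‖w₀‖)
    (g₀ : EuclideanSpace ℝ (Fin n)) (hg₀ : g₀ = -(‖w₀‖⁻¹ • w₀)) :
    sInf ((fun w => ⟪w, g₀⟫) '' D) < 0 ∧
    Tendsto (fun α : ℝ => (φ (x₀ + α • g₀) - φ x₀) / α) (nhdsWithin 0 (Set.Ioi 0))
      (nhds (sInf ((fun w => ⟪w, g₀⟫) '' D))) ∧
    ∀ᶠ α : ℝ in nhdsWithin 0 (Set.Ioi 0), φ (x₀ + α • g₀) < φ x₀ :=
  steepest_descent_direction_general n M f hf φ hφ x₀ D hD h0 w₀ hw₀ g₀ hg₀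
end

section
/- Let v : [0,T] → ℝ be bounded and measurable, and suppose for every δ̄ > 0 the function v is piecewise continuous on [0,T] except on the union of finitely many open intervals of total length at most δ̄. For a uniform partition t₁ = 0 < t₂ < … < t_N = T let L_N be the piecewise linear interpolant with nodes (t_i, v(t_i)). Then for every ε > 0 there exists N̄(ε) such that for all N > N̄(ε), ∫₀ᵀ (L_N(t) − v(t))² dt ≤ ε. -/
/-!
Swallow the finitely many exceptional points into short intervals, so that `v` is continuous,
hence uniformly continuous, on the compact set `K` left over when intervals of total length `δ`
are removed from `[0, T]`. On a grid cell of width `h` contained in `K` the interpolant is a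
convex combination of two nodal values, each within `e` of `v t`; on any other cell the error
is at most `2C`, and such cells lie in the intervals enlarged by `h`, of total length at most
`δ + 2rh`. Hence `∫ (L_N - v)² ≤ e² T + 4C² (δ + 2rh)`, which is small once `e`, `δ` and
then `h = T / (N - 1)` are small.
-/

open Set

/-- Piecewise linear interpolant of `v` on the uniform grid of `N` nodes
`tᵢ = (i-1)·T/(N-1)`, `i = 1, …, N`, on `[0, T]`. -/
noncomputable def uniformLinearInterp (v : ℝ → ℝ) (T : ℝ) (N : ℕ) (t : ℝ) : ℝ :=
  let h : ℝ := T / ((N : ℝ) - 1)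
  let i : ℕ := ⌊t / h⌋.toNat
  v (i * h) + (v ((i + 1 : ℕ) * h) - v (i * h)) * (t - i * h) / h

open MeasureTheory Filter Topology

theorem abs_add_mul_sub_sub_le_max {a b x θ : ℝ} (hθ : θ ∈ Icc (0 : ℝ) 1) :
    |a + θ * (b - a) - x| ≤ max |a - x| |b - x| :=
  calc |a + θ * (b - a) - x| = |(1 - θ) * (a - x) + θ * (b - x)| := by ring_nf
    _ ≤ (1 - θ) * |a - x| + θ * |b - x| := by
      refine (abs_add_le _ _).trans_eq ?_
      rw [abs_mul, abs_mul, abs_of_nonneg (sub_nonneg.2 hθ.2), abs_of_nonneg hθ.1]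
    _ ≤ (1 - θ) * max |a - x| |b - x| + θ * max |a - x| |b - x| := by
      gcongr
      · linarith [hθ.2]
      · exact le_max_left _ _
      · exact hθ.1
      · exact le_max_right _ _
    _ = max |a - x| |b - x| := by ring

theorem volume_iUnion_Ioo_sub_add_le {ι : Type*} [Fintype ι] {c d : ι → ℝ} {h : ℝ}
    (hcd : ∀ j, c j ≤ d j) (hh : 0 ≤ h) :
    volume (⋃ j, Ioo (c j - h) (d j + h)) ≤
      ENNReal.ofReal (∑ j, (d j - c j) + 2 * Fintype.card ι * h) :=
  calc volume (⋃ j, Ioo (c j - h) (d j + h)) ≤ ∑ j, volume (Ioo (c j - h) (d j + h)) :=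
        measure_iUnion_fintype_le _ _
    _ = ENNReal.ofReal (∑ j, (d j + h - (c j - h))) := by
      simp only [Real.volume_Ioo]
      rw [ENNReal.ofReal_sum_of_nonneg fun j _ ↦ by linarith [hcd j]]
    _ = ENNReal.ofReal (∑ j, (d j - c j) + 2 * Fintype.card ι * h) := by
      congr 1
      simp only [sub_sub_eq_add_sub, add_sub_right_comm _ _ (c _), Finset.sum_add_distrib,
        Finset.sum_const, Finset.card_univ, nsmul_eq_mul]
      ring

theorem intervalIntegral_le_of_le_add_indicator {f : ℝ → ℝ} {T A B m : ℝ} {U : Set ℝ}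
    (hT : 0 ≤ T) (hB : 0 ≤ B) (hm : 0 ≤ m) (hU : MeasurableSet U)
    (hUm : volume U ≤ ENNReal.ofReal m) (hf₀ : ∀ t, 0 ≤ f t)
    (hf : ∀ t ∈ Ioo 0 T, f t ≤ A + B * U.indicator 1 t) :
    ∫ t in (0 : ℝ)..T, f t ≤ A * T + B * m := by
  have hfin : volume (Ioo 0 T) ≠ ⊤ := measure_Ioo_lt_top.ne
  have hA : IntegrableOn (fun _ ↦ A) (Ioo 0 T) := integrableOn_const hfin
  have hBU : IntegrableOn (fun t ↦ B * U.indicator 1 t) (Ioo 0 T) :=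
    Integrable.const_mul ((integrableOn_const (C := (1 : ℝ)) hfin).indicator hU) B
  rw [intervalIntegral.integral_of_le hT, integral_Ioc_eq_integral_Ioo]
  calc ∫ t in Ioo 0 T, f t ≤ ∫ t in Ioo 0 T, (A + B * U.indicator 1 t) :=
        integral_mono_of_nonneg (ae_of_all _ hf₀) (hA.add hBU)
          (ae_restrict_of_forall_mem measurableSet_Ioo hf)
    _ = A * T + B * volume.real (Ioo 0 T ∩ U) := by
      rw [integral_add hA hBU,
        integral_const_mul, setIntegral_const, integral_indicator_one hU]
      simp [measureReal_def, Real.volume_Ioo, hT, mul_comm, Measure.restrict_apply hU,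
        inter_comm]
    _ ≤ A * T + B * m := by
      gcongr
      exact ENNReal.toReal_le_of_le_ofReal hm ((measure_mono inter_subset_right).trans hUm)

theorem exists_iUnion_Ioo_continuousOn_diff {v : ℝ → ℝ} {s : Set ℝ}
    (hpc : ∀ δ : ℝ, 0 < δ → ∃ (r : ℕ) (c d : Fin r → ℝ) (P : Finset ℝ),
      (∀ j, c j ≤ d j) ∧ (∑ j, (d j - c j)) ≤ δ ∧
      ∀ t ∈ (s \ ⋃ j, Ioo (c j) (d j)) \ (P : Set ℝ), ContinuousAt v t)
    {δ : ℝ} (hδ : 0 < δ) :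
    ∃ (ι : Type) (_ : Fintype ι) (c d : ι → ℝ), (∀ j, c j ≤ d j) ∧ ∑ j, (d j - c j) ≤ δ ∧
      ContinuousOn v (s \ ⋃ j, Ioo (c j) (d j)) := by
  obtain ⟨r, c, d, P, hcd, hlen, hcont⟩ := hpc (δ / 2) (half_pos hδ)
  set η := δ / (4 * (P.card + 1))
  have hη : 0 < η := by positivity
  refine ⟨Fin r ⊕ P, inferInstance, Sum.elim c fun p ↦ p - η, Sum.elim d fun p ↦ p + η,
    ?_, ?_, ?_⟩
  · rintro (j | p)
    exacts [hcd j, by simp only [Sum.elim_inr]; linarith]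
  · calc _ = ∑ j, (d j - c j) + P.card * (2 * η) := by
            simp only [Fintype.sum_sum_type, Sum.elim_inl, Sum.elim_inr, add_sub_sub_cancel,
              ← two_mul, Finset.sum_const, Finset.card_univ, Fintype.card_coe, nsmul_eq_mul]
      _ ≤ δ / 2 + (P.card + 1) * (2 * η) := by gcongr; linarith
      _ = δ := by simp only [η]; field_simp; ring
  · intro t ht
    simp only [Set.mem_sdiff, mem_iUnion, Sum.exists, Sum.elim_inl, Sum.elim_inr, not_or,
      not_exists] at ht
    refine (hcont t ⟨⟨ht.1, mem_iUnion.not.2 (not_exists.2 ht.2.1)⟩, fun htP ↦ ?_⟩)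
      |>.continuousWithinAt
    exact ht.2.2 ⟨t, htP⟩ ⟨by linarith, by linarith⟩

theorem exists_cell_uniformLinearInterp_eq (v : ℝ → ℝ) {T t : ℝ} {N : ℕ} (hT : 0 < T)
    (hN : 2 ≤ N) (ht : t ∈ Ico 0 T) :
    ∃ a, Icc a (a + T / (N - 1)) ⊆ Icc 0 T ∧ t ∈ Ico a (a + T / (N - 1)) ∧
      ∃ θ ∈ Icc (0 : ℝ) 1,
        uniformLinearInterp v T N t = v a + θ * (v (a + T / (N - 1)) - v a) := by
  set h := T / ((N : ℝ) - 1) with hh_def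
  have hN1 : (1 : ℝ) < N := by exact_mod_cast hN
  have hh : 0 < h := div_pos hT (by linarith)
  have hNh : ((N : ℝ) - 1) * h = T := mul_div_cancel₀ T (by linarith)
  set i := ⌊t / h⌋.toNat with hi_def
  have hi : (i : ℝ) = ⌊t / h⌋ := by
    rw [hi_def, ← Int.cast_natCast,
      Int.toNat_of_nonneg (Int.floor_nonneg.2 (div_nonneg ht.1 hh.le))]
  have hit : i * h ≤ t := by
    rw [← le_div_iff₀ hh, hi]; exact Int.floor_le _
  have hti : t < i * h + h := by
    rw [← add_one_mul, ← div_lt_iff₀ hh, hi]; exact Int.lt_floor_add_one _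
  have hiN : (i : ℝ) + 1 ≤ N - 1 := by
    have : (i : ℝ) < N - 1 :=
      lt_of_mul_lt_mul_right (by rw [hNh]; exact hit.trans_lt ht.2) hh.le
    have : i + 1 < N := by exact_mod_cast (by linarith : (i : ℝ) + 1 < N)
    have : ((i + 2 : ℕ) : ℝ) ≤ N := by exact_mod_cast (by omega : i + 2 ≤ N)
    push_cast at this
    linarith
  refine ⟨i * h, Icc_subset_Icc (by positivity) ?_, ⟨hit, hti⟩, (t - i * h) / h,
    ⟨div_nonneg (sub_nonneg.2 hit) hh.le, (div_le_one hh).2 (by linarith)⟩, ?_⟩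
  · calc (i : ℝ) * h + h = ((i : ℝ) + 1) * h := by ring
      _ ≤ (N - 1) * h := by gcongr
      _ = T := hNh
  · simp only [uniformLinearInterp, ← hh_def, ← hi_def]
    push_cast
    ring_nf

theorem sq_uniformLinearInterp_sub_le {v : ℝ → ℝ} {T C e ρ t : ℝ} {N : ℕ}
    {ι : Type*} {c d : ι → ℝ} (hT : 0 < T) (hN : 2 ≤ N) (hρ : T / (N - 1) < ρ)
    (hC : ∀ x ∈ Icc 0 T, |v x| ≤ C)
    (hunif : ∀ x ∈ Icc 0 T \ ⋃ j, Ioo (c j) (d j), ∀ y ∈ Icc 0 T \ ⋃ j, Ioo (c j) (d j),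
      dist x y < ρ → dist (v x) (v y) < e)
    (ht : t ∈ Ico 0 T) :
    (uniformLinearInterp v T N t - v t) ^ 2 ≤
      e ^ 2 +
        (2 * C) ^ 2 * (⋃ j, Ioo (c j - T / (N - 1)) (d j + T / (N - 1))).indicator 1 t := by
  obtain ⟨a, hcell, hta, θ, hθ, hL⟩ := exists_cell_uniformLinearInterp_eq v hT hN ht
  set h := T / ((N : ℝ) - 1)
  have hlerp := abs_add_mul_sub_sub_le_max (a := v a) (b := v (a + h)) (x := v t) hθ
  have hat : a ∈ Icc a (a + h) := left_mem_Icc.2 (by linarith [hta.1, hta.2])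
  have hbt : a + h ∈ Icc a (a + h) := right_mem_Icc.2 (by linarith [hta.1, hta.2])
  have htt : t ∈ Icc a (a + h) := Ico_subset_Icc_self hta
  rw [hL, ← sq_abs]
  by_cases hgood : Icc a (a + h) ⊆ Icc 0 T \ ⋃ j, Ioo (c j) (d j)
  · have hdist : ∀ x ∈ Icc a (a + h), |v x - v t| < e := fun x hx ↦ by
      rw [← Real.dist_eq]
      refine hunif x (hgood hx) t (hgood htt) ?_
      rw [Real.dist_eq, abs_sub_lt_iff]
      constructor <;> linarith [hx.1, hx.2, hta.1, hta.2]
    calc |v a + θ * (v (a + h) - v a) - v t| ^ 2 ≤ e ^ 2 :=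
          pow_le_pow_left₀ (abs_nonneg _)
            (hlerp.trans (max_lt (hdist a hat) (hdist _ hbt)).le) 2
      _ ≤ _ := le_add_of_nonneg_right
          (mul_nonneg (sq_nonneg _) (indicator_nonneg (fun _ _ ↦ zero_le_one) _))
  · obtain ⟨x, hx, hxK⟩ := not_subset.1 hgood
    obtain ⟨j, hj⟩ : ∃ j, x ∈ Ioo (c j) (d j) := by
      by_contra! hx'
      exact hxK ⟨hcell hx, by simpa using hx'⟩
    have htU : t ∈ ⋃ j, Ioo (c j - h) (d j + h) :=
      mem_iUnion.2 ⟨j, by constructor <;> linarith [hx.1, hx.2, hj.1, hj.2, hta.1, hta.2]⟩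
    have hbound : ∀ x ∈ Icc a (a + h), |v x - v t| ≤ 2 * C := fun x hx ↦ by
      linarith [abs_sub (v x) (v t), hC x (hcell hx), hC t (hcell htt)]
    rw [indicator_of_mem htU, Pi.one_apply, mul_one]
    calc |v a + θ * (v (a + h) - v a) - v t| ^ 2 ≤ (2 * C) ^ 2 :=
          pow_le_pow_left₀ (abs_nonneg _)
            (hlerp.trans (max_le (hbound a hat) (hbound _ hbt))) 2
      _ ≤ _ := le_add_of_nonneg_left (sq_nonneg e)

theorem integral_sq_uniformLinearInterp_sub_le {v : ℝ → ℝ} {T C e ρ : ℝ} {N : ℕ}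
    {ι : Type*} [Fintype ι] {c d : ι → ℝ} (hT : 0 < T) (hN : 2 ≤ N) (hρ : T / (N - 1) < ρ)
    (hC : ∀ x ∈ Icc 0 T, |v x| ≤ C) (hcd : ∀ j, c j ≤ d j)
    (hunif : ∀ x ∈ Icc 0 T \ ⋃ j, Ioo (c j) (d j), ∀ y ∈ Icc 0 T \ ⋃ j, Ioo (c j) (d j),
      dist x y < ρ → dist (v x) (v y) < e) :
    ∫ t in (0 : ℝ)..T, (uniformLinearInterp v T N t - v t) ^ 2 ≤
      e ^ 2 * T + (2 * C) ^ 2 * (∑ j, (d j - c j) + 2 * Fintype.card ι * (T / (N - 1))) := by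
  have hh : 0 ≤ T / ((N : ℝ) - 1) :=
    div_nonneg hT.le (sub_nonneg.2 (by exact_mod_cast (by omega : 1 ≤ N)))
  have hS : 0 ≤ ∑ j, (d j - c j) := Finset.sum_nonneg fun j _ ↦ sub_nonneg.2 (hcd j)
  exact intervalIntegral_le_of_le_add_indicator hT.le (sq_nonneg _) (by positivity)
    (MeasurableSet.iUnion fun _ ↦ measurableSet_Ioo) (volume_iUnion_Ioo_sub_add_le hcd hh)
    (fun _ ↦ sq_nonneg _)
    fun t ht ↦ sq_uniformLinearInterp_sub_le hT hN hρ hC hunif (Ioo_subset_Ico_self ht)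

theorem uniformLinearInterp_L2_convergence_general
    (T : ℝ) (hT : 0 < T) (v : ℝ → ℝ)
    (hbdd : ∃ C : ℝ, ∀ t ∈ Icc 0 T, |v t| ≤ C)
    (hpc : ∀ δ : ℝ, 0 < δ → ∃ (r : ℕ) (c d : Fin r → ℝ) (P : Finset ℝ),
      (∀ j, c j ≤ d j) ∧
      (∑ j, (d j - c j)) ≤ δ ∧
      ∀ t ∈ (Icc 0 T \ ⋃ j, Ioo (c j) (d j)) \ (P : Set ℝ), ContinuousAt v t) :
    ∀ ε : ℝ, 0 < ε → ∃ Nbar : ℕ, ∀ N : ℕ, N > Nbar →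
      ∫ t in (0:ℝ)..T, (uniformLinearInterp v T N t - v t) ^ 2 ≤ ε := by
  obtain ⟨C, hC⟩ := hbdd
  intro ε hε
  set δ := ε / (4 * ((2 * C) ^ 2 + 1))
  obtain ⟨ι, _, c, d, hcd, hlen, hcont⟩ :=
    exists_iUnion_Ioo_continuousOn_diff hpc (δ := δ) (by positivity)
  have hK : IsCompact (Icc 0 T \ ⋃ j, Ioo (c j) (d j)) :=
    isCompact_Icc.diff (isOpen_iUnion fun _ ↦ isOpen_Ioo)
  set e := √(ε / (4 * T))
  obtain ⟨ρ, hρ, hunif⟩ := Metric.uniformContinuousOn_iff.1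
    (hK.uniformContinuousOn_of_continuous hcont) e (by positivity)
  have hmesh : Tendsto (fun N : ℕ ↦ T / ((N : ℝ) - 1)) atTop (𝓝 0) :=
    tendsto_const_nhds.div_atTop (tendsto_atTop_add_const_right _ _ tendsto_natCast_atTop_atTop)
  have hmesh' : Tendsto (fun N : ℕ ↦ (2 * C) ^ 2 * (2 * Fintype.card ι * (T / ((N : ℝ) - 1))))
      atTop (𝓝 0) := by
    simpa using (hmesh.const_mul _).const_mul _
  obtain ⟨N₀, hN₀⟩ := eventually_atTop.1 <| (eventually_ge_atTop 2).and <|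
    (hmesh.eventually (gt_mem_nhds hρ)).and
      (hmesh'.eventually (gt_mem_nhds (show (0 : ℝ) < ε / 4 by positivity)))
  refine ⟨N₀, fun N hN ↦ ?_⟩
  obtain ⟨hN2, hNρ, hNε⟩ := hN₀ N hN.le
  have he : e ^ 2 * T = ε / 4 := by
    rw [Real.sq_sqrt (by positivity)]; field_simp
  have hδ : (2 * C) ^ 2 * ∑ j, (d j - c j) ≤ ε / 4 :=
    calc (2 * C) ^ 2 * ∑ j, (d j - c j) ≤ ((2 * C) ^ 2 + 1) * δ :=
          mul_le_mul (by linarith) hlen (Finset.sum_nonneg fun j _ ↦ sub_nonneg.2 (hcd j))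
            (by positivity)
      _ = ε / 4 := by simp only [δ]; field_simp
  calc _ ≤ e ^ 2 * T +
          (2 * C) ^ 2 * (∑ j, (d j - c j) + 2 * Fintype.card ι * (T / (N - 1))) :=
        integral_sq_uniformLinearInterp_sub_le hT hN2 hNρ hC hcd hunif
    _ ≤ ε := by rw [mul_add, he]; linarith

/-- If `v ∈ L^∞[0,T]` is, for every `δ̄ > 0`, piecewise continuous on `[0,T]` outside a
finite union of open intervals of total length at most `δ̄`, then the piecewise linear
interpolants on uniform grids converge to `v` in `L²[0,T]`: for each `ε > 0` there is
`N̄(ε)` with `∫₀ᵀ (L_N - v)² ≤ ε` for all `N > N̄(ε)`. -/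
theorem uniformLinearInterp_L2_convergence
    (T : ℝ) (hT : 0 < T) (v : ℝ → ℝ)
    (hmeas : Measurable v)
    (hbdd : ∃ C : ℝ, ∀ t ∈ Icc 0 T, |v t| ≤ C)
    (hpc : ∀ δ : ℝ, 0 < δ → ∃ (r : ℕ) (c d : Fin r → ℝ) (P : Finset ℝ),
      (∀ j, c j ≤ d j) ∧
      (∑ j, (d j - c j)) ≤ δ ∧
      ∀ t ∈ (Icc 0 T \ ⋃ j, Ioo (c j) (d j)) \ (P : Set ℝ), ContinuousAt v t) :
    ∀ ε : ℝ, 0 < ε → ∃ Nbar : ℕ, ∀ N : ℕ, N > Nbar →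
      ∫ t in (0:ℝ)..T, (uniformLinearInterp v T N t - v t) ^ 2 ≤ ε :=
  uniformLinearInterp_L2_convergence_general T hT v hbdd hpc
end

section
/- Let φ(x) = min_{i=1,…,M} f_i(x) with f_i : ℝⁿ → ℝ continuously differentiable, and let the level set L₁ = {x : φ(x) ≤ φ(x₁)} be bounded for the initial point x₁. Define Ψ(x) = min_{‖g‖=1} min_{i ∈ R(x)} ⟨∇f_i(x), g⟩. Consider the steepest-descent sequence x_{k+1} = x_k + α_k g_k, where g_k is a steepest-descent direction at x_k (i.e., min_{i ∈ R(x_k)}⟨∇f_i(x_k), g_k⟩ = Ψ(x_k), ‖g_k‖ = 1) and α_k minimizes α ↦ φ(x_k + α g_k) over α ≥ 0. Then liminf_{k→∞} Ψ(x_k) ≥ 0. -/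
open RealInnerProductSpace Filter

/-- Convergence of the steepest (superdifferential) descent method for
`φ = min_i f_i`: along the sequence generated by exact line search in steepest
descent directions, `liminf Ψ(x_k) ≥ 0`. -/
theorem steepest_descent_liminf (n M : ℕ) (hM : 0 < M)
    (f : Fin M → EuclideanSpace ℝ (Fin n) → ℝ)
    (hf : ∀ i, ContDiff ℝ 1 (f i))
    (φ : EuclideanSpace ℝ (Fin n) → ℝ)
    (hφ : ∀ x, φ x = ⨅ i, f i x)
    (Ψ : EuclideanSpace ℝ (Fin n) → ℝ)
    (hΨ : ∀ x, Ψ x = sInf {v : ℝ | ∃ g : EuclideanSpace ℝ (Fin n), ‖g‖ = 1 ∧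
      v = sInf {w : ℝ | ∃ i : Fin M, f i x = φ x ∧ w = ⟪gradient (f i) x, g⟫}})
    (x g : ℕ → EuclideanSpace ℝ (Fin n)) (α : ℕ → ℝ)
    (hlev : Bornology.IsBounded {y : EuclideanSpace ℝ (Fin n) | φ y ≤ φ (x 0)})
    (hg : ∀ k, ‖g k‖ = 1 ∧
      sInf {w : ℝ | ∃ i : Fin M, f i (x k) = φ (x k) ∧
        w = ⟪gradient (f i) (x k), g k⟫} = Ψ (x k))
    (hα : ∀ k, 0 ≤ α k ∧ ∀ β : ℝ, 0 ≤ β → φ (x k + α k • g k) ≤ φ (x k + β • g k))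
    (hx : ∀ k, x (k + 1) = x k + α k • g k) :
    0 ≤ Filter.liminf (fun k => Ψ (x k)) Filter.atTop := by
  classical
  haveI hne : Nonempty (Fin M) := ⟨⟨0, hM⟩⟩
  -- φ is the pointwise min of the f i
  have hφle : ∀ (y : EuclideanSpace ℝ (Fin n)) i, φ y ≤ f i y := by
    intro y i
    rw [hφ]
    exact ciInf_le (Set.Finite.bddBelow (Set.finite_range _)) i
  have hφex : ∀ y : EuclideanSpace ℝ (Fin n), ∃ i, f i y = φ y := by
    intro y
    obtain ⟨i, hi⟩ := Finite.exists_min (fun i => f i y)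
    refine ⟨i, le_antisymm ?_ (hφle y i)⟩
    rw [hφ]
    exact le_ciInf hi
  -- φ is continuous
  have hφc : Continuous φ := by
    have h1 : Continuous (fun y : EuclideanSpace ℝ (Fin n) => Finset.univ.inf' Finset.univ_nonempty
        (fun i => f i y)) :=
      Continuous.finset_inf'_apply _ (fun i _ => (hf i).continuous)
    convert h1 using 1
    funext y
    rw [hφ, ← Finset.inf'_univ_eq_ciInf]
  -- monotonicity of φ along the sequence
  have hmono : ∀ k, φ (x (k + 1)) ≤ φ (x k) := by
    intro k
    rw [hx k]
    simpa using (hα k).2 0 le_rfl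
  have hant : Antitone (fun k => φ (x k)) := antitone_nat_of_succ_le hmono
  have hmem : ∀ k, φ (x k) ≤ φ (x 0) := fun k => hant (Nat.zero_le k)
  -- a compact set containing the level set and a neighborhood
  obtain ⟨R, hR⟩ := hlev.subset_closedBall 0
  set K : Set (EuclideanSpace ℝ (Fin n)) := Metric.closedBall 0 (R + 1) with hKdef
  have hK : IsCompact K := isCompact_closedBall _ _
  have hxK : ∀ k, x k ∈ Metric.closedBall (0 : EuclideanSpace ℝ (Fin n)) R := fun k => hR (hmem k)
  have hRnonneg : 0 ≤ R := by
    have := hxK 0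
    simp only [Metric.mem_closedBall, dist_zero_right] at this
    exact le_trans (norm_nonneg _) this
  have hxK' : ∀ k, x k ∈ K := by
    intro k
    have h1 := hxK k
    simp only [Metric.mem_closedBall, dist_zero_right] at h1
    simp only [hKdef, Metric.mem_closedBall, dist_zero_right]
    linarith
  -- lower bound for φ on K
  obtain ⟨z, hzK, hz⟩ := hK.exists_isMinOn ⟨0, by simp [hKdef]; linarith⟩ hφc.continuousOn
  set m := φ z with hm
  have hmle : ∀ k, m ≤ φ (x k) := fun k => hz (hxK' k)
  -- continuity of all gradients, packaged as a map into a Pi type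
  have hgc : ∀ i, Continuous (fun z : EuclideanSpace ℝ (Fin n) => gradient (f i) z) := by
    intro i
    exact (InnerProductSpace.toDual ℝ (EuclideanSpace ℝ (Fin n))).symm.continuous.comp
      ((hf i).continuous_fderiv one_ne_zero)
  set G : EuclideanSpace ℝ (Fin n) → (Fin M → EuclideanSpace ℝ (Fin n)) := fun z i => gradient (f i) z with hGdef
  have hGc : Continuous G := continuous_pi hgc
  -- Main claim
  have H : ∀ ε : ℝ, 0 < ε → ∀ᶠ k in atTop, -ε ≤ Ψ (x k) := by
    intro ε hε
    by_contra hcon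
    rw [Filter.not_eventually] at hcon
    have hcon' : ∀ N : ℕ, ∃ k ≥ N, Ψ (x k) < -ε := by
      intro N
      obtain ⟨k, hk, hk'⟩ := (Filter.frequently_atTop.mp hcon) N
      exact ⟨k, hk, not_le.mp hk'⟩
    -- uniform continuity of the gradients on K
    have hGu := (hK.uniformContinuousOn_of_continuous hGc.continuousOn)
    rw [Metric.uniformContinuousOn_iff] at hGu
    obtain ⟨δ, hδpos, hδ⟩ := hGu (ε / 2) (by linarith)
    set β : ℝ := min (δ / 2) 1 with hβdef
    have hβpos : 0 < β := lt_min (by linarith) one_pos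
    have hβ1 : β ≤ 1 := min_le_right _ _
    have hβδ : β < δ := lt_of_le_of_lt (min_le_left _ _) (by linarith)
    -- the key descent estimate
    have drop : ∀ k, Ψ (x k) < -ε → φ (x (k + 1)) ≤ φ (x k) - β * (ε / 2) := by
      intro k hk
      obtain ⟨hgk, hSk⟩ := hg k
      set S : Set ℝ := {w | ∃ i : Fin M, f i (x k) = φ (x k) ∧
        w = ⟪gradient (f i) (x k), g k⟫} with hSdef
      have hSne : S.Nonempty := by
        obtain ⟨i, hi⟩ := hφex (x k)
        exact ⟨_, i, hi, rfl⟩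
      have hSfin : S.Finite := by
        apply (Set.finite_range (fun i : Fin M => ⟪gradient (f i) (x k), g k⟫)).subset
        rintro w ⟨i, -, rfl⟩
        exact ⟨i, rfl⟩
      have hmemS : Ψ (x k) ∈ S := by
        rw [← hSk]
        exact hSne.csInf_mem hSfin
      obtain ⟨i, hact, hval⟩ := hmemS
      -- derivative of t ↦ f i (x k + t • g k)
      have hder : ∀ t : ℝ, HasDerivAt (fun s : ℝ => f i (x k + s • g k))
          ⟪gradient (f i) (x k + t • g k), g k⟫ t := by
        intro t
        have hline : HasDerivAt (fun s : ℝ => x k + s • g k) (g k) t := by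
          simpa using ((hasDerivAt_id t).smul_const (g k)).const_add (x k)
        have hgrad : HasGradientAt (f i) (gradient (f i) (x k + t • g k))
            (x k + t • g k) :=
          (((hf i).differentiable one_ne_zero) _).hasGradientAt
        have h2 : HasDerivAt (fun s : ℝ => f i (x k + s • g k)) _ t := hgrad.hasFDerivAt.comp_hasDerivAt t hline
        simpa [InnerProductSpace.toDual_apply_apply] using h2
      obtain ⟨c, hc, hcslope⟩ := exists_hasDerivAt_eq_slope
        (fun s : ℝ => f i (x k + s • g k))
        (fun s : ℝ => ⟪gradient (f i) (x k + s • g k), g k⟫) hβpos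
        (fun t _ => (hder t).continuousAt.continuousWithinAt)
        (fun t _ => hder t)
      have hceval : f i (x k + β • g k) - f i (x k) =
          β * ⟪gradient (f i) (x k + c • g k), g k⟫ := by
        have hβne : β ≠ 0 := hβpos.ne'
        rw [hcslope]
        simp only [zero_smul, add_zero, sub_zero]
        field_simp
      -- bound the derivative at c using uniform continuity
      have hcmem : c ∈ Set.Ioo (0 : ℝ) β := hc
      have hξK : x k + c • g k ∈ K := by
        have h1 : ‖x k + c • g k‖ ≤ ‖x k‖ + ‖c • g k‖ := norm_add_le _ _
        have h2 : ‖c • g k‖ = |c| * ‖g k‖ := by rw [norm_smul, Real.norm_eq_abs]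
        have h3 : ‖x k‖ ≤ R := by
          have := hxK k
          simpa [Metric.mem_closedBall, dist_zero_right] using this
        have h4 : |c| ≤ 1 := by
          rw [abs_of_pos hcmem.1]
          linarith [hcmem.2]
        simp only [hKdef, Metric.mem_closedBall, dist_zero_right]
        rw [hgk] at h2
        nlinarith
      have hdistc : dist (x k + c • g k) (x k) < δ := by
        rw [dist_eq_norm]
        simp only [add_sub_cancel_left]
        rw [norm_smul, Real.norm_eq_abs, hgk, abs_of_pos hcmem.1]
        linarith [hcmem.2]
      have hGd := hδ _ hξK _ (hxK' k) hdistc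
      have hgd : dist (gradient (f i) (x k + c • g k)) (gradient (f i) (x k)) < ε / 2 :=
        lt_of_le_of_lt (dist_le_pi_dist (G (x k + c • g k)) (G (x k)) i) hGd
      have hineq : ⟪gradient (f i) (x k + c • g k), g k⟫ ≤ Ψ (x k) + ε / 2 := by
        have h1 : ⟪gradient (f i) (x k + c • g k) - gradient (f i) (x k), g k⟫ ≤
            ‖gradient (f i) (x k + c • g k) - gradient (f i) (x k)‖ * ‖g k‖ :=
          real_inner_le_norm _ _
        rw [inner_sub_left, hgk, mul_one, ← dist_eq_norm] at h1
        linarith [hval ▸ h1]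
      have hfle : f i (x k + β • g k) ≤ φ (x k) - β * (ε / 2) := by
        have h1 : ⟪gradient (f i) (x k + c • g k), g k⟫ ≤ -(ε / 2) := by linarith
        have h2 : f i (x k) = φ (x k) := hact
        nlinarith
      calc φ (x (k + 1)) = φ (x k + α k • g k) := by rw [hx k]
        _ ≤ φ (x k + β • g k) := (hα k).2 β hβpos.le
        _ ≤ f i (x k + β • g k) := hφle _ _
        _ ≤ φ (x k) - β * (ε / 2) := hfle
    -- iterate the descent to contradict the lower bound m
    have hdesc : ∀ j : ℕ, ∃ k, φ (x k) ≤ φ (x 0) - j * (β * (ε / 2)) := by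
      intro j
      induction j with
      | zero => exact ⟨0, by simp⟩
      | succ j ih =>
        obtain ⟨k, hk⟩ := ih
        obtain ⟨k', hk'ge, hk'neg⟩ := hcon' k
        refine ⟨k' + 1, ?_⟩
        have h1 := drop k' hk'neg
        have h2 : φ (x k') ≤ φ (x k) := hant hk'ge
        push_cast
        linarith
    obtain ⟨j, hj⟩ := exists_nat_gt ((φ (x 0) - m) / (β * (ε / 2)))
    obtain ⟨k, hk⟩ := hdesc j
    have h1 : m ≤ φ (x k) := hmle k
    have h2 : 0 < β * (ε / 2) := by positivity
    rw [div_lt_iff₀ h2] at hj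
    linarith
  -- conclude about the liminf
  by_cases hcob : IsCoboundedUnder (· ≥ ·) atTop (fun k => Ψ (x k))
  · by_contra hneg
    push_neg at hneg
    have h1 := H (-(liminf (fun k => Ψ (x k)) atTop) / 2) (by linarith)
    have h2 := le_liminf_of_le hcob h1
    linarith
  · have hbdd : ¬ BddAbove {a : ℝ | ∀ᶠ k in atTop, a ≤ Ψ (x k)} := by
      intro ⟨b, hb⟩
      exact hcob ⟨b, fun a ha => hb (by simpa [Filter.eventually_map] using ha)⟩
    rw [Filter.liminf_eq]
    rw [Real.sSup_of_not_bddAbove (by simpa using hbdd)]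
end

section
/- Let f₁, …, f_M : ℝⁿ → ℝ be C¹ and φ = min_i f_i. Suppose along a sequence x_k contained in a compact set one has Ψ(x_k) ≤ −b for some b > 0, where Ψ(x) = min_{‖g‖=1} min_{i ∈ R(x)} ⟨∇f_i(x), g⟩ and g_k attains this minimum. Then there exists ᾱ > 0, independent of k, such that φ(x_k + ᾱ g_k) ≤ φ(x_k) − ᾱb/2 for all k. -/
open RealInnerProductSpace

/-- Uniform decrease along steepest descent directions: if `Ψ(x_k) ≤ -b < 0` along a
sequence in a compact set, then there is `ᾱ > 0`, independent of `k`, with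
`φ(x_k + ᾱ g_k) ≤ φ(x_k) - ᾱ b / 2` for all `k`. -/
theorem uniform_decrease_steepest_descent (n M : ℕ) (hM : 0 < M)
    (f : Fin M → EuclideanSpace ℝ (Fin n) → ℝ)
    (hf : ∀ i, ContDiff ℝ 1 (f i))
    (φ : EuclideanSpace ℝ (Fin n) → ℝ)
    (hφ : ∀ x, φ x = ⨅ i, f i x)
    (Ψ : EuclideanSpace ℝ (Fin n) → ℝ)
    (hΨ : ∀ x, Ψ x = sInf {v : ℝ | ∃ g : EuclideanSpace ℝ (Fin n), ‖g‖ = 1 ∧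
      v = sInf {w : ℝ | ∃ i : Fin M, f i x = φ x ∧ w = ⟪gradient (f i) x, g⟫}})
    (K : Set (EuclideanSpace ℝ (Fin n))) (hK : IsCompact K)
    (x g : ℕ → EuclideanSpace ℝ (Fin n))
    (hxK : ∀ k, x k ∈ K)
    (hg : ∀ k, ‖g k‖ = 1 ∧
      sInf {w : ℝ | ∃ i : Fin M, f i (x k) = φ (x k) ∧
        w = ⟪gradient (f i) (x k), g k⟫} = Ψ (x k))
    (b : ℝ) (hb : 0 < b)
    (hΨb : ∀ k, Ψ (x k) ≤ -b) :
    ∃ αbar : ℝ, 0 < αbar ∧ ∀ k, φ (x k + αbar • g k) ≤ φ (x k) - αbar * b / 2 := by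
  haveI : Nonempty (Fin M) := ⟨⟨0, hM⟩⟩
  -- φ is a lower bound
  have hφle : ∀ y i, φ y ≤ f i y := fun y i => by
    rw [hφ y]; exact ciInf_le (Set.Finite.bddBelow (Set.finite_range _)) i
  -- there is an active index at every point
  have hactive : ∀ y, ∃ i, f i y = φ y := by
    intro y
    obtain ⟨i, hi⟩ := Finite.exists_min (fun i => f i y)
    exact ⟨i, le_antisymm (by rw [hφ y]; exact le_ciInf hi) (hφle y i)⟩
  -- choose i_k active with inner product ≤ -b
  have hik : ∀ k, ∃ i, f i (x k) = φ (x k) ∧ ⟪gradient (f i) (x k), g k⟫ ≤ -b := by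
    intro k
    set S : Set ℝ := {w : ℝ | ∃ i : Fin M, f i (x k) = φ (x k) ∧
        w = ⟪gradient (f i) (x k), g k⟫} with hS
    have hSfin : S.Finite := by
      apply (Set.finite_range (fun i : Fin M => ⟪gradient (f i) (x k), g k⟫)).subset
      rintro w ⟨i, -, rfl⟩; exact ⟨i, rfl⟩
    have hSne : S.Nonempty := by
      obtain ⟨i, hi⟩ := hactive (x k)
      exact ⟨_, i, hi, rfl⟩
    have hmem : sInf S ∈ S := Set.Nonempty.csInf_mem hSne hSfin
    obtain ⟨i, hi1, hi2⟩ := hmem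
    refine ⟨i, hi1, ?_⟩
    rw [← hi2, (hg k).2]
    exact hΨb k
  choose ι hι1 hι2 using hik
  -- gradients are continuous
  have hgradcont : ∀ i, Continuous (gradient (f i)) := by
    intro i
    have : Continuous (fderiv ℝ (f i)) := (hf i).continuous_fderiv one_ne_zero
    exact ((InnerProductSpace.toDual ℝ _).symm.continuous).comp this
  -- uniform continuity on a compact thickening
  set K' := Metric.cthickening 1 K with hK'def
  have hK' : IsCompact K' := hK.cthickening
  have hKsub : K ⊆ K' := Metric.self_subset_cthickening K
  have huc : ∀ i : Fin M, ∃ δ > 0, ∀ y ∈ K', ∀ z ∈ K', dist y z < δ →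
      dist (gradient (f i) y) (gradient (f i) z) < b / 2 := by
    intro i
    have := (hK'.uniformContinuousOn_of_continuous (hgradcont i).continuousOn)
    rw [Metric.uniformContinuousOn_iff] at this
    exact this (b / 2) (by linarith)
  choose δ hδpos hδ using huc
  set δ0 : ℝ := Finset.univ.inf' Finset.univ_nonempty δ with hδ0
  have hδ0pos : 0 < δ0 := by
    apply Finset.lt_inf'_iff _ |>.mpr
    exact fun i _ => hδpos i
  set α := min 1 δ0 / 2 with hα
  have hαpos : 0 < α := by positivity
  have hα1 : α ≤ 1 := by
    have : min 1 δ0 ≤ 1 := min_le_left _ _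
    linarith
  have hαδ : ∀ i, α < δ i := by
    intro i
    have h1 : δ0 ≤ δ i := Finset.inf'_le _ (Finset.mem_univ i)
    have h2 : min 1 δ0 ≤ δ0 := min_le_right _ _
    linarith [hδ0pos, hδpos i]
  refine ⟨α, hαpos, fun k => ?_⟩
  set i := ι k
  set y := x k
  set u := g k
  have hu1 : ‖u‖ = 1 := (hg k).1
  -- membership in K'
  have hmemK' : ∀ t ∈ Set.Icc (0:ℝ) α, y + t • u ∈ K' := by
    intro t ht
    apply Metric.mem_cthickening_of_dist_le _ y 1 K (hxK k)
    rw [dist_eq_norm, add_sub_cancel_left, norm_smul, hu1, mul_one,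
      Real.norm_eq_abs, abs_of_nonneg ht.1]
    exact le_trans ht.2 hα1
  -- gradient bound along segment
  have hgradbound : ∀ t ∈ Set.Icc (0:ℝ) α,
      ⟪gradient (f i) (y + t • u), u⟫ ≤ -b / 2 := by
    intro t ht
    have hd : dist (y + t • u) y < δ i := by
      rw [dist_eq_norm, add_sub_cancel_left, norm_smul, hu1, mul_one,
        Real.norm_eq_abs, abs_of_nonneg ht.1]
      exact lt_of_le_of_lt ht.2 (hαδ i)
    have hnear := hδ i (y + t • u) (hmemK' t ht) y (hKsub (hxK k)) hd
    rw [dist_eq_norm] at hnear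
    have hsplit : ⟪gradient (f i) (y + t • u), u⟫ =
        ⟪gradient (f i) y, u⟫ + ⟪gradient (f i) (y + t • u) - gradient (f i) y, u⟫ := by
      rw [inner_sub_left]; ring
    rw [hsplit]
    have hcs : ⟪gradient (f i) (y + t • u) - gradient (f i) y, u⟫ ≤
        ‖gradient (f i) (y + t • u) - gradient (f i) y‖ := by
      calc _ ≤ ‖gradient (f i) (y + t • u) - gradient (f i) y‖ * ‖u‖ :=
            real_inner_le_norm _ _
        _ = _ := by rw [hu1, mul_one]
    have := hι2 k
    linarith
  -- derivative of t ↦ f i (y + t • u)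
  have hderiv : ∀ t : ℝ, HasDerivAt (fun s => f i (y + s • u) + b / 2 * s)
      (⟪gradient (f i) (y + t • u), u⟫ + b / 2) t := by
    intro t
    have hcurve : HasDerivAt (fun s : ℝ => y + s • u) u t := by
      simpa using ((hasDerivAt_id t).smul_const u).const_add y
    have hdiff : DifferentiableAt ℝ (f i) (y + t • u) :=
      ((hf i).differentiable one_ne_zero).differentiableAt
    have hfd : HasFDerivAt (f i) (fderiv ℝ (f i) (y + t • u)) (y + t • u) :=
      hdiff.hasFDerivAt
    have hcomp := hfd.comp_hasDerivAt t hcurve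
    have hinner : fderiv ℝ (f i) (y + t • u) u = ⟪gradient (f i) (y + t • u), u⟫ := by
      rw [gradient, InnerProductSpace.toDual_symm_apply]
    have hlin : HasDerivAt (fun s : ℝ => b / 2 * s) (b / 2) t := by
      simpa using (hasDerivAt_id t).const_mul (b / 2)
    have := hcomp.add hlin
    rw [hinner] at this
    exact this
  -- antitone
  have hanti : AntitoneOn (fun s => f i (y + s • u) + b / 2 * s) (Set.Icc 0 α) := by
    apply antitoneOn_of_deriv_nonpos (convex_Icc 0 α)
    · exact fun t _ => ((hderiv t).continuousAt).continuousWithinAt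
    · intro t ht
      exact ((hderiv t).differentiableAt).differentiableWithinAt
    · intro t ht
      rw [interior_Icc] at ht
      rw [(hderiv t).deriv]
      have := hgradbound t ⟨le_of_lt ht.1, le_of_lt ht.2⟩
      linarith
  have hmono := hanti (Set.left_mem_Icc.mpr (le_of_lt hαpos))
    (Set.right_mem_Icc.mpr (le_of_lt hαpos)) (le_of_lt hαpos)
  simp only [zero_smul, add_zero, mul_zero] at hmono
  have hfinal : f i (y + α • u) ≤ f i y - α * b / 2 := by
    have := hι1 k
    nlinarith
  calc φ (y + α • u) ≤ f i (y + α • u) := hφle _ i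
    _ ≤ f i y - α * b / 2 := hfinal
    _ = φ (y + α • u) + (f i y - α * b / 2 - φ (y + α • u)) := by ring
    _ ≤ φ y - α * b / 2 := by rw [hι1 k]; linarith [hφle (y + α • u) i]
end
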